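/- Let β, γ ∈ (0,1), let λ_S, λ_I, λ_R ∈ (0,1), and for each pair H, J ∈ {S,I,R} let μ_{HJ} be a Borel probability measure on ℝ with zero mean and common finite variance σ². Assume the contraction condition ν := max_{H,J∈{S,I,R}} ( λ_J² + ∫_ℝ (1−λ_J+η)² dμ_{JH}(η) ) < 1. For J ∈ {S,I,R} let f_J, g_J : [0,∞) × ℝ → [0,∞) be two families such that for each t ≥ 0 the functions f_J(t,·), g_J(t,·) are nonnegative and integrable with Σ_{J} ∫_ℝ f_J(t,w) dw = Σ_{J} ∫_ℝ g_J(t,w) dw = 1, and whose Fourier transforms F_J(ξ,t) = ∫_ℝ e^{−iwξ} f_J(t,w) dw (and analogously G_J) are, for each fixed ξ ∈ ℝ, differentiable in t and satisfy the Fourier-transformed kinetic system: ∂_t F_S(ξ,t) = −β I_f(t) F_S(ξ,t) + Σ_{J∈{S,I,R}} [ (∫_ℝ F_S((1−λ_S+η)ξ, t) dμ_{SJ}(η)) F_J(λ_J ξ, t) − (∫_ℝ f_J(t,w)dw) F_S(ξ,t) ]; ∂_t F_I(ξ,t) = β I_f(t) F_S(ξ,t) − γ F_I(ξ,t) + Σ_{J∈{S,I,R}}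 [ (∫_ℝ F_I((1−λ_I+η)ξ, t) dμ_{IJ}(η)) F_J(λ_J ξ, t) − (∫_ℝ f_J(t,w)dw) F_I(ξ,t) ]; ∂_t F_R(ξ,t) = γ F_I(ξ,t) + Σ_{J∈{S,I,R}} [ (∫_ℝ F_R((1−λ_R+η)ξ, t) dμ_{RJ}(η)) F_J(λ_J ξ, t) − (∫_ℝ f_J(t,w)dw) F_R(ξ,t) ], where I_f(t) = ∫_ℝ f_I(t,w) dw, and the same system holds for G_J with I_g(t) = ∫_ℝ g_I(t,w)dw. Assume moreover that for every t ≥ 0 and every J ∈ {S,I,R} the masses ∫_ℝ f_J(t,w)dw = ∫_ℝ g_J(t,w)dw and the first moments ∫_ℝ w f_J(t,w)dw = ∫_ℝ w g_J(t,w)dw coincide, and that Σ_{J} d₂(f_J(0,·), g_J(0,·)) < ∞. Then for all t ≥ 0: Σ_{J∈{S,I,R}} d₂(f_J(t,·), g_J(t,·)) ≤ e^{−(1−ν)t} · Σ_{J∈{S,I,R}} d₂(f_J(0,·), g_J(0,·)). -/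

import Mathlib

open MeasureTheory
open scoped ENNReal

/-- The three epidemiological classes: susceptible, infectious, recovered. -/
inductive Cls : Type
  | S | I | R
deriving DecidableEq

instance : Fintype Cls :=
  ⟨{Cls.S, Cls.I, Cls.R}, fun x => by cases x <;> simp⟩

/-- The Fourier transform `f̂(ξ) = ∫ e^{-iwξ} f(w) dw` of an integrable function. -/
noncomputable def ft (f : ℝ → ℝ) (ξ : ℝ) : ℂ :=
  ∫ w : ℝ, Complex.exp (-Complex.I * (w : ℂ) * (ξ : ℂ)) * (f w : ℂ)

/-- The Fourier-based distance `d₂(f,g) = sup_{ξ≠0} |f̂(ξ)-ĝ(ξ)|/ξ²`. -/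
noncomputable def d2 (f g : ℝ → ℝ) : ℝ≥0∞ :=
  ⨆ ξ : {x : ℝ // x ≠ 0},
    ENNReal.ofReal (‖ft f (ξ : ℝ) - ft g (ξ : ℝ)‖ / (ξ : ℝ) ^ 2)

/-- The Fourier transform of the wealth-exchange Boltzmann collision operator
`∑_J Q(f_H, f_J)`:
`∑_J [(∫ f̂_H((1-λ_H+η)ξ) dμ_{HJ}(η)) f̂_J(λ_J ξ) - (∫ f_J) f̂_H(ξ)]`. -/
noncomputable def collision (lam : Cls → ℝ) (μ : Cls → Cls → Measure ℝ)
    (f : Cls → ℝ → ℝ) (H : Cls) (ξ : ℝ) : ℂ :=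
  ∑ J : Cls, ((∫ η, ft (f H) ((1 - lam H + η) * ξ) ∂(μ H J)) * ft (f J) (lam J * ξ)
    - ((∫ w, f J w : ℝ) : ℂ) * ft (f H) ξ)

/-!
Write `φ_H(t, ξ) = f̂_H(t, ξ) - ĝ_H(t, ξ)`. Since the masses of `f` and `g` agree class by class
and sum to one, the loss part of the collision operator contributes exactly `-φ_H`, so
`∂ₜ φ_H = -(1 + ℓ_H) φ_H + s_H`, where `ℓ_H` is the epidemic outflow rate of class `H` and the
source `s_H` collects the epidemic inflow and the difference of the gain terms. If
`|φ_J| ≤ h_J ξ²` for every class `J`, the difference of the gain terms is at most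
`∑_J (m_J ∫ (1 - λ_H + η)² dμ_{HJ} h_H + m_H λ_J² h_J) ξ²`; summed over `H` this is at most
`ν ∑_H h_H`, while the epidemic inflow exactly compensates the outflow. Hence the right Dini
derivative of `∑_H d₂(f_H, g_H)` is at most `-(1 - ν)` times itself, and Grönwall's inequality
concludes.

The Dini estimate needs `t ↦ d₂(f_H(t), g_H(t))` to be finite and continuous. Finiteness comes
from a bootstrap: a bound `|φ| ≤ p ξ² + b` gives `|∂ₜ φ| ≤ 7 (p ξ² + b)`, so on a time step of
length `1/14` the coefficient `p` at most doubles; continuity then follows from the resulting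
uniform bound on `|∂ₜ φ| / ξ²`.
-/

open Set Filter Topology

theorem eventually_Icc_subset_of_mem_nhdsGE {a : ℝ} {S : Set ℝ} (hS : S ∈ 𝓝[≥] a) :
    ∀ᶠ z in 𝓝[>] a, Icc a z ⊆ S := by
  obtain ⟨u, hau, hu⟩ := mem_nhdsGE_iff_exists_Ico_subset.mp hS
  filter_upwards [Ioo_mem_nhdsGT hau] with z hz
  exact (Icc_subset_Ico_right hz.2).trans hu

section DampedODE

variable {E : Type*} [NormedAddCommGroup E] [NormedSpace ℝ E]

theorem norm_le_of_hasDerivWithinAt_damped {u κ : ℝ → E} {c : ℝ → ℝ} {a b c₀ ε M L σ : ℝ}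
    (hab : a ≤ b) (hu : ∀ s ∈ Icc a b, HasDerivWithinAt u (-(c s) • u s + κ s) (Icc a b) s)
    (hc : ∀ s ∈ Icc a b, |c s - c₀| ≤ ε) (hM : ∀ s ∈ Icc a b, ‖u s‖ ≤ M)
    (hL : ∀ s ∈ Icc a b, ‖u s - u a‖ ≤ L) (hκ : ∀ s ∈ Icc a b, ‖κ s‖ ≤ σ)
    (hc₀ : 0 ≤ c₀) (hc₀b : c₀ * (b - a) ≤ 1) :
    ‖u b‖ ≤ (1 - c₀ * (b - a)) * ‖u a‖ + (ε * M + c₀ * L + σ) * (b - a) := by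
  -- `v s = u s - (1 - c₀ (s - a)) • u a`; its derivative involves only `c - c₀`, `u - u a`, `κ`.
  set v : ℝ → E := fun s => u s - u a + (c₀ * (s - a)) • u a
  have hv : ∀ s ∈ Icc a b, HasDerivWithinAt v
      (-(c s - c₀) • u s - c₀ • (u s - u a) + κ s) (Icc a b) s := by
    intro s hs
    have hlin : HasDerivWithinAt (fun s => (c₀ * (s - a)) • u a) (c₀ • u a) (Icc a b) s := by
      simpa using ((hasDerivWithinAt_id s _).sub_const a).const_mul c₀ |>.smul_const (u a)
    refine (((hu s hs).sub_const (u a)).add hlin).congr_deriv ?_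
    rw [neg_sub, sub_smul, smul_sub, neg_smul]
    abel
  have hbound : ∀ s ∈ Ico a b,
      ‖-(c s - c₀) • u s - c₀ • (u s - u a) + κ s‖ ≤ ε * M + c₀ * L + σ := by
    intro s hs
    have hs' := Ico_subset_Icc_self hs
    calc _ ≤ ‖-(c s - c₀) • u s‖ + ‖c₀ • (u s - u a)‖ + ‖κ s‖ :=
          (norm_add_le _ _).trans (add_le_add_left (norm_sub_le _ _) _)
      _ ≤ ε * M + c₀ * L + σ := by
        rw [norm_smul, norm_smul, norm_neg, Real.norm_eq_abs, Real.norm_of_nonneg hc₀]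
        gcongr
        · exact (abs_nonneg _).trans (hc s hs')
        · exact hc s hs'
        · exact hM s hs'
        · exact hL s hs'
        · exact hκ s hs'
  have hvb := norm_image_sub_le_of_norm_deriv_le_segment' hv hbound b ⟨hab, le_rfl⟩
  have hub : u b = (v b - v a) + (1 - c₀ * (b - a)) • u a := by
    simp only [v, sub_self, mul_zero, zero_smul, add_zero, sub_smul, one_smul]
    abel
  rw [hub]
  calc _ ≤ ‖v b - v a‖ + ‖(1 - c₀ * (b - a)) • u a‖ := norm_add_le _ _
    _ = ‖v b - v a‖ + (1 - c₀ * (b - a)) * ‖u a‖ := by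
      rw [norm_smul, Real.norm_of_nonneg (by linarith)]
    _ ≤ _ := by linarith

end DampedODE

section LeastWeightedBound

variable {ι E : Type*} [NormedAddCommGroup E] {u κ : ι → ℝ → E} {w : ι → ℝ} {h c σ : ℝ → ℝ}

theorem lipschitzOnWith_of_isLeast {s : Set ℝ} {L : ℝ}
    (hh : ∀ t ∈ s, IsLeast {C | ∀ i, ‖u i t‖ ≤ C * w i} (h t))
    (hL : ∀ i, ∀ x ∈ s, ∀ y ∈ s, ‖u i x - u i y‖ ≤ L * w i * dist x y) :
    LipschitzOnWith (Real.toNNReal L) h s :=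
  LipschitzOnWith.of_le_add_mul' L fun x hx y hy => (hh x hx).2 fun i =>
    calc ‖u i x‖ ≤ ‖u i y‖ + ‖u i x - u i y‖ := norm_le_norm_add_norm_sub' _ _
      _ ≤ h y * w i + L * w i * dist x y := add_le_add ((hh y hy).1 i) (hL i x hx y hy)
      _ = (h y + L * dist x y) * w i := by ring

variable [NormedSpace ℝ E]

theorem le_of_isLeast_of_hasDerivWithinAt_damped {t₀ z ε L : ℝ} (hz : t₀ ≤ z)
    (hw : ∀ i, 0 ≤ w i)
    (ht₀ : IsLeast {C | ∀ i, ‖u i t₀‖ ≤ C * w i} (h t₀))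
    (htz : IsLeast {C | ∀ i, ‖u i z‖ ≤ C * w i} (h z))
    (hu : ∀ i, ∀ s ∈ Icc t₀ z, HasDerivWithinAt (u i) (-(c s) • u i s + κ i s) (Icc t₀ z) s)
    (hκ : ∀ i, ∀ s ∈ Icc t₀ z, ‖κ i s‖ ≤ σ s * w i)
    (hL : ∀ i, ∀ s ∈ Icc t₀ z, ‖u i s - u i t₀‖ ≤ L * w i * (z - t₀))
    (hc : ∀ s ∈ Icc t₀ z, |c s - c t₀| ≤ ε) (hσ : ∀ s ∈ Icc t₀ z, σ s ≤ σ t₀ + ε)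
    (hc₀ : 0 ≤ c t₀) (hc₀z : c t₀ * (z - t₀) ≤ 1) :
    h z ≤ (1 - c t₀ * (z - t₀)) * h t₀
      + (ε * (h t₀ + L * (z - t₀)) + c t₀ * (L * (z - t₀)) + (σ t₀ + ε)) * (z - t₀) := by
  refine htz.2 fun i => ?_
  have hui : ∀ s ∈ Icc t₀ z, ‖u i s‖ ≤ (h t₀ + L * (z - t₀)) * w i := fun s hs =>
    calc ‖u i s‖ ≤ ‖u i t₀‖ + ‖u i s - u i t₀‖ := norm_le_norm_add_norm_sub' _ _
      _ ≤ h t₀ * w i + L * w i * (z - t₀) := add_le_add (ht₀.1 i) (hL i s hs)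
      _ = _ := by ring
  have hκi : ∀ s ∈ Icc t₀ z, ‖κ i s‖ ≤ (σ t₀ + ε) * w i := fun s hs =>
    (hκ i s hs).trans (mul_le_mul_of_nonneg_right (hσ s hs) (hw i))
  have := norm_le_of_hasDerivWithinAt_damped hz (hu i) hc hui (hL i) hκi hc₀ hc₀z
  calc ‖u i z‖ ≤ _ := this
    _ ≤ (1 - c t₀ * (z - t₀)) * (h t₀ * w i)
        + (ε * ((h t₀ + L * (z - t₀)) * w i) + c t₀ * (L * w i * (z - t₀))
          + (σ t₀ + ε) * w i) * (z - t₀) := by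
      gcongr
      exact ht₀.1 i
    _ = _ := by ring

theorem eventually_slope_lt_of_isLeast {t₀ T L r : ℝ} (hT : t₀ < T) (hw : ∀ i, 0 ≤ w i)
    (hh : ∀ s ∈ Icc t₀ T, IsLeast {C | ∀ i, ‖u i s‖ ≤ C * w i} (h s))
    (hu : ∀ i, ∀ s ∈ Icc t₀ T, HasDerivWithinAt (u i) (-(c s) • u i s + κ i s) (Icc t₀ T) s)
    (hκ : ∀ i, ∀ s ∈ Icc t₀ T, ‖κ i s‖ ≤ σ s * w i)
    (hL₀ : 0 ≤ L) (hL : ∀ i, ∀ s ∈ Icc t₀ T, ‖u i s - u i t₀‖ ≤ L * w i * dist s t₀)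
    (hc₀ : 0 ≤ c t₀) (hc : ContinuousWithinAt c (Icc t₀ T) t₀)
    (hσ : ContinuousWithinAt σ (Icc t₀ T) t₀) (hr : -c t₀ * h t₀ + σ t₀ < r) :
    ∀ᶠ z in 𝓝[>] t₀, (z - t₀)⁻¹ * (h z - h t₀) < r := by
  set ρ := r - (-c t₀ * h t₀ + σ t₀)
  set ε := ρ / (3 * (|h t₀| + 1))
  have hε : 0 < ε := by positivity
  have hεh : ε * (h t₀ + 1) ≤ ρ / 3 := by
    calc ε * (h t₀ + 1) ≤ ε * (|h t₀| + 1) := by gcongr; exact le_abs_self _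
      _ = ρ / 3 := by simp only [ε]; field_simp
  have hnear : Tendsto (fun z => z - t₀) (𝓝[>] t₀) (𝓝 0) :=
    tendsto_nhdsWithin_of_tendsto_nhds (by simpa using (continuous_sub_right t₀).tendsto t₀)
  have hcσ : {s | |c s - c t₀| ≤ ε ∧ σ s ≤ σ t₀ + ε} ∩ Icc t₀ T ∈ 𝓝[≥] t₀ := by
    rw [← nhdsWithin_Icc_eq_nhdsGE hT]
    refine inter_mem ?_ self_mem_nhdsWithin
    filter_upwards [Metric.tendsto_nhds.mp hc ε hε, Metric.tendsto_nhds.mp hσ ε hε]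
      with s hcs hσs
    rw [Real.dist_eq] at hcs hσs
    exact ⟨hcs.le, by linarith [(abs_lt.mp hσs).2]⟩
  filter_upwards [eventually_Icc_subset_of_mem_nhdsGE hcσ,
    (hnear.const_mul ((ε + c t₀) * L)).eventually_lt_const
      (by rw [mul_zero]; positivity : (ε + c t₀) * L * 0 < ρ / 3),
    (hnear.const_mul (c t₀)).eventually_lt_const (by rw [mul_zero]; exact one_pos),
    self_mem_nhdsWithin] with z hsub hLz hcz (htz : t₀ < z)
  have hzT : Icc t₀ z ⊆ Icc t₀ T := fun s hs => (hsub hs).2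
  have hbound := le_of_isLeast_of_hasDerivWithinAt_damped (ε := ε) (L := L) htz.le hw
    (hh t₀ (left_mem_Icc.mpr hT.le)) (hh z (hzT (right_mem_Icc.mpr htz.le)))
    (fun i s hs => (hu i s (hzT hs)).mono hzT) (fun i s hs => hκ i s (hzT hs))
    (fun i s hs => ?_) (fun s hs => (hsub hs).1.1) (fun s hs => (hsub hs).1.2) hc₀
    (by simpa using hcz.le)
  · have hslope : h z - h t₀ ≤ (z - t₀) * (-c t₀ * h t₀ + σ t₀ + ε * (h t₀ + 1)
        + (ε + c t₀) * L * (z - t₀)) := by linarith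
    rw [inv_mul_lt_iff₀ (sub_pos.mpr htz)]
    refine hslope.trans_lt (mul_lt_mul_of_pos_left ?_ (sub_pos.mpr htz))
    linarith
  · refine (hL i s (hzT hs)).trans ?_
    rw [Real.dist_eq, abs_of_nonneg (sub_nonneg.mpr hs.1)]
    have := mul_nonneg hL₀ (hw i)
    gcongr
    exact hs.2

end LeastWeightedBound

section Bootstrap

variable {ι E : Type*} [NormedAddCommGroup E] [NormedSpace ℝ E] {u u' : ι → ℝ → E}
  {w : ι → ℝ} {B L : ℝ}

theorem norm_le_two_mul_of_hasDerivAt (hL : 0 < L) (hw : ∀ i, 0 ≤ w i)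
    (hu : ∀ i, ∀ s ≥ 0, HasDerivAt (u i) (u' i s) s) (hB : ∀ i, ∀ s ≥ 0, ‖u i s‖ ≤ B)
    (hu' : ∀ s ≥ 0, ∀ p b, 0 ≤ p → 0 ≤ b → (∀ i, ‖u i s‖ ≤ p * w i + b) →
      ∀ i, ‖u' i s‖ ≤ L * (p * w i + b))
    {t₀ C : ℝ} (ht₀ : 0 ≤ t₀) (hC : 0 ≤ C) (h₀ : ∀ i, ‖u i t₀‖ ≤ C * w i) :
    ∀ i, ∀ s ∈ Icc t₀ (t₀ + (2 * L)⁻¹), ‖u i s‖ ≤ 2 * C * w i := by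
  -- Starting from the crude bound `B`, each pass through the mean value inequality halves the
  -- additive error.
  have key : ∀ n : ℕ, ∀ i, ∀ s ∈ Icc t₀ (t₀ + (2 * L)⁻¹),
      ‖u i s‖ ≤ 2 * C * w i + B * 2⁻¹ ^ n := by
    intro n
    induction n with
    | zero =>
      intro i s hs
      have := mul_nonneg (mul_nonneg zero_le_two hC) (hw i)
      simpa using (hB i s (ht₀.trans hs.1)).trans (le_add_of_nonneg_left this)
    | succ n ih =>
      intro i s hs
      have hB₀ : 0 ≤ B := (norm_nonneg _).trans (hB i t₀ ht₀)
      have hderiv : ∀ x ∈ Icc t₀ s, HasDerivWithinAt (u i) (u' i x) (Icc t₀ s) x :=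
        fun x hx => (hu i x (ht₀.trans hx.1)).hasDerivWithinAt
      have hbound : ∀ x ∈ Ico t₀ s, ‖u' i x‖ ≤ L * (2 * C * w i + B * 2⁻¹ ^ n) :=
        fun x hx => hu' x (ht₀.trans hx.1) (2 * C) (B * 2⁻¹ ^ n) (by positivity)
          (by positivity) (fun j => ih j x ⟨hx.1, hx.2.le.trans hs.2⟩) i
      have hmvt := norm_image_sub_le_of_norm_deriv_le_segment' hderiv hbound s ⟨hs.1, le_rfl⟩
      have hst : L * (s - t₀) ≤ 2⁻¹ :=
        calc L * (s - t₀) ≤ L * (2 * L)⁻¹ := by gcongr; linarith [hs.2]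
          _ = 2⁻¹ := by field_simp
      calc ‖u i s‖ ≤ ‖u i t₀‖ + ‖u i s - u i t₀‖ := norm_le_norm_add_norm_sub' _ _
        _ ≤ C * w i + L * (2 * C * w i + B * 2⁻¹ ^ n) * (s - t₀) := add_le_add (h₀ i) hmvt
        _ ≤ C * w i + (2 * C * w i + B * 2⁻¹ ^ n) * 2⁻¹ := by
          have hX : 0 ≤ 2 * C * w i + B * 2⁻¹ ^ n := by have := hw i; positivity
          nlinarith [mul_le_mul_of_nonneg_left hst hX]
        _ = 2 * C * w i + B * 2⁻¹ ^ (n + 1) := by ring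
  intro i s hs
  have hlim : Tendsto (fun n : ℕ => 2 * C * w i + B * 2⁻¹ ^ n) atTop (𝓝 (2 * C * w i)) := by
    simpa using tendsto_const_nhds.add ((tendsto_pow_atTop_nhds_zero_of_lt_one
      (by norm_num) (by norm_num : (2⁻¹ : ℝ) < 1)).const_mul B)
  exact ge_of_tendsto' hlim (key · i s hs)

theorem exists_norm_le_mul_of_hasDerivAt (hL : 0 < L) (hw : ∀ i, 0 ≤ w i)
    (hu : ∀ i, ∀ s ≥ 0, HasDerivAt (u i) (u' i s) s) (hB : ∀ i, ∀ s ≥ 0, ‖u i s‖ ≤ B)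
    (hu' : ∀ s ≥ 0, ∀ p b, 0 ≤ p → 0 ≤ b → (∀ i, ‖u i s‖ ≤ p * w i + b) →
      ∀ i, ‖u' i s‖ ≤ L * (p * w i + b))
    {C : ℝ} (hC : 0 ≤ C) (h₀ : ∀ i, ‖u i 0‖ ≤ C * w i) (T : ℝ) :
    ∃ M, 0 ≤ M ∧ ∀ i, ∀ s ∈ Icc 0 T, ‖u i s‖ ≤ M * w i := by
  have step : ∀ k : ℕ, ∀ i, ∀ s ∈ Icc 0 (k * (2 * L)⁻¹), ‖u i s‖ ≤ 2 ^ k * C * w i := by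
    intro k
    induction k with
    | zero =>
      intro i s hs
      obtain rfl : s = 0 := le_antisymm (by simpa using hs.2) hs.1
      simpa using h₀ i
    | succ k ih =>
      intro i s hs
      have hk : (0 : ℝ) ≤ k * (2 * L)⁻¹ := by positivity
      rcases le_or_gt s (k * (2 * L)⁻¹) with hsk | hsk
      · calc ‖u i s‖ ≤ 2 ^ k * C * w i := ih i s ⟨hs.1, hsk⟩
          _ ≤ 2 ^ (k + 1) * C * w i := by
            have := hw i
            gcongr
            · norm_num
            · omega
      · have := norm_le_two_mul_of_hasDerivAt hL hw hu hB hu' hk (by positivity)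
          (ih · _ ⟨hk, le_rfl⟩) i s ⟨hsk.le, by push_cast at hs; linarith [hs.2]⟩
        rw [pow_succ]
        linarith
  obtain ⟨k, hk⟩ := exists_nat_ge (2 * L * T)
  refine ⟨2 ^ k * C, by positivity, fun i s hs => step k i s ⟨hs.1, hs.2.trans ?_⟩⟩
  rw [← div_eq_mul_inv, le_div_iff₀ (by positivity)]
  linarith

end Bootstrap

theorem eventually_sum_lt_of_eventually_lt {α β : Type*} {l : Filter β} (s : Finset α)
    {q : α → β → ℝ} {a : α → ℝ} (hq : ∀ i ∈ s, ∀ r, a i < r → ∀ᶠ z in l, q i z < r) :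
    ∀ r, ∑ i ∈ s, a i < r → ∀ᶠ z in l, ∑ i ∈ s, q i z < r := by
  classical
  induction s using Finset.induction_on with
  | empty => simpa using fun r hr => Eventually.of_forall fun _ => hr
  | insert j s hj ih =>
    intro r hr
    rw [Finset.sum_insert hj] at hr
    set δ := (r - a j - ∑ i ∈ s, a i) / 2
    filter_upwards [hq j (s.mem_insert_self j) (a j + δ) (by simp only [δ]; linarith),
      ih (fun i hi => hq i (Finset.mem_insert_of_mem hi)) (∑ i ∈ s, a i + δ)
        (by simp only [δ]; linarith)] with z hjz hsz
    rw [Finset.sum_insert hj]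
    simp only [δ] at hjz hsz
    linarith

theorem sum_le_exp_mul_of_eventually_slope_lt {α : Type*} [Fintype α] {h a : α → ℝ → ℝ}
    {K T : ℝ} (hT : 0 ≤ T) (hcont : ∀ i, ContinuousOn (h i) (Icc 0 T))
    (hslope : ∀ i, ∀ x ∈ Ico 0 T, ∀ r, a i x < r →
      ∀ᶠ z in 𝓝[>] x, (z - x)⁻¹ * (h i z - h i x) < r)
    (ha : ∀ x ∈ Ico 0 T, ∑ i, a i x ≤ K * ∑ i, h i x) :
    ∑ i, h i T ≤ Real.exp (K * T) * ∑ i, h i 0 := by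
  have := le_gronwallBound_of_liminf_deriv_right_le (f := fun x => ∑ i, h i x)
    (f' := fun x => ∑ i, a i x) (ε := 0) (continuousOn_finsetSum _ fun i _ => hcont i)
    (fun x hx r hr => ?_) le_rfl (by simpa using ha) T ⟨hT, le_rfl⟩
  · rwa [gronwallBound_ε0, sub_zero, mul_comm] at this
  · refine (eventually_sum_lt_of_eventually_lt Finset.univ
      (fun i _ => hslope i x hx) r hr).frequently.mono fun z hz => ?_
    rwa [← Finset.sum_sub_distrib, Finset.mul_sum]

theorem integrable_add_sq {μ : Measure ℝ} [IsFiniteMeasure μ] (h : Integrable (fun η => η ^ 2) μ)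
    (a : ℝ) : Integrable (fun η => (a + η) ^ 2) μ :=
  ((integrable_const (2 * a ^ 2)).add (h.const_mul 2)).mono' (by fun_prop) <|
    Eventually.of_forall fun η => by
      rw [Real.norm_eq_abs, abs_of_nonneg (sq_nonneg _)]
      change (a + η) ^ 2 ≤ 2 * a ^ 2 + 2 * η ^ 2
      nlinarith [sq_nonneg (a - η)]

theorem norm_ft_integrand (f : ℝ → ℝ) (w ξ : ℝ) :
    ‖Complex.exp (-Complex.I * (w : ℂ) * (ξ : ℂ)) * (f w : ℂ)‖ = |f w| := by
  rw [norm_mul, Complex.norm_exp, Complex.norm_real, Real.norm_eq_abs]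
  simp

theorem norm_ft_le_integral_abs (f : ℝ → ℝ) (ξ : ℝ) : ‖ft f ξ‖ ≤ ∫ w, |f w| :=
  (norm_integral_le_integral_norm _).trans_eq <| by simp_rw [norm_ft_integrand]

theorem norm_ft_le_integral {f : ℝ → ℝ} (hf : ∀ w, 0 ≤ f w) (ξ : ℝ) :
    ‖ft f ξ‖ ≤ ∫ w, f w :=
  (norm_integral_le_integral_norm _).trans_eq <| by
    simp_rw [norm_ft_integrand, abs_of_nonneg (hf _)]

theorem ft_zero (f : ℝ → ℝ) : ft f 0 = ((∫ w, f w : ℝ) : ℂ) := by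
  simpa [ft] using integral_complex_ofReal

theorem continuous_ft {f : ℝ → ℝ} (hf : Integrable f) : Continuous (ft f) :=
  continuous_of_dominated (fun ξ => by fun_prop)
    (fun ξ => Eventually.of_forall fun w => (norm_ft_integrand f w ξ).le) hf.abs
    (Eventually.of_forall fun w => by fun_prop)

theorem integrable_ft_comp {μ : Measure ℝ} [IsFiniteMeasure μ] {f : ℝ → ℝ} (hf : Integrable f)
    {a : ℝ → ℝ} (ha : Continuous a) : Integrable (fun η => ft f (a η)) μ :=
  .of_bound ((continuous_ft hf).comp ha).aestronglyMeasurable _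
    (Eventually.of_forall fun η => norm_ft_le_integral_abs f (a η))

theorem d2_le_ofReal {f g : ℝ → ℝ} {C : ℝ}
    (h : ∀ ξ, ‖ft f ξ - ft g ξ‖ ≤ C * ξ ^ 2) : d2 f g ≤ ENNReal.ofReal C :=
  iSup_le fun ⟨ξ, hξ⟩ => ENNReal.ofReal_le_ofReal <|
    (div_le_iff₀ (by positivity)).mpr (h ξ)

theorem isLeast_toReal_d2 {f g : ℝ → ℝ} (hfin : d2 f g ≠ ⊤) (hmass : ∫ w, f w = ∫ w, g w) :
    IsLeast {C | ∀ ξ, ‖ft f ξ - ft g ξ‖ ≤ C * ξ ^ 2} (d2 f g).toReal := by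
  refine ⟨fun ξ => ?_, fun C hC => ?_⟩
  · rcases eq_or_ne ξ 0 with rfl | hξ
    · simp [ft_zero, hmass]
    have := ENNReal.toReal_mono hfin (le_iSup (fun ζ : {x : ℝ // x ≠ 0} =>
      ENNReal.ofReal (‖ft f ζ - ft g ζ‖ / (ζ : ℝ) ^ 2)) ⟨ξ, hξ⟩)
    rwa [ENNReal.toReal_ofReal (by positivity), div_le_iff₀ (by positivity)] at this
  · have hC₀ : 0 ≤ C := by simpa using (norm_nonneg _).trans (hC 1)
    exact ENNReal.toReal_le_of_le_ofReal hC₀ (d2_le_ofReal hC)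

theorem norm_integral_ft_sub_le {μ : Measure ℝ} [IsProbabilityMeasure μ] {f g : ℝ → ℝ}
    (hf : Integrable f) (hg : Integrable g) {a p b : ℝ}
    (ha : Integrable (fun η => (a + η) ^ 2) μ)
    (hfg : ∀ ζ, ‖ft f ζ - ft g ζ‖ ≤ p * ζ ^ 2 + b) (ξ : ℝ) :
    ‖(∫ η, ft f ((a + η) * ξ) ∂μ) - ∫ η, ft g ((a + η) * ξ) ∂μ‖
      ≤ p * (∫ η, (a + η) ^ 2 ∂μ) * ξ ^ 2 + b := by
  rw [← integral_sub (integrable_ft_comp hf (by fun_prop)) (integrable_ft_comp hg (by fun_prop))]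
  refine (norm_integral_le_integral_norm _).trans ?_
  calc ∫ η, ‖ft f ((a + η) * ξ) - ft g ((a + η) * ξ)‖ ∂μ
      ≤ ∫ η, (p * ξ ^ 2 * (a + η) ^ 2 + b) ∂μ := by
        refine integral_mono_of_nonneg (Eventually.of_forall fun _ => norm_nonneg _)
          ((ha.const_mul _).add (integrable_const b)) (Eventually.of_forall fun η => ?_)
        simpa [mul_pow, mul_comm, mul_left_comm, mul_assoc] using hfg ((a + η) * ξ)
    _ = p * (∫ η, (a + η) ^ 2 ∂μ) * ξ ^ 2 + b := by
        rw [integral_add (ha.const_mul _) (integrable_const b), integral_const_mul]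
        simp only [integral_const, probReal_univ, one_smul]
        ring

/-- The gain part of the Fourier-transformed collision operator. -/
noncomputable def gain (lam : Cls → ℝ) (μ : Cls → Cls → Measure ℝ) (f : Cls → ℝ → ℝ) (H : Cls)
    (ξ : ℝ) : ℂ :=
  ∑ J : Cls, (∫ η, ft (f H) ((1 - lam H + η) * ξ) ∂(μ H J)) * ft (f J) (lam J * ξ)

theorem collision_eq_gain_sub (lam : Cls → ℝ) (μ : Cls → Cls → Measure ℝ) (f : Cls → ℝ → ℝ)
    (H : Cls) (ξ : ℝ) :
    collision lam μ f H ξ = gain lam μ f H ξ - ((∑ J, ∫ w, f J w : ℝ) : ℂ) * ft (f H) ξ := by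
  simp only [collision, gain, Finset.sum_sub_distrib, Finset.sum_mul, Complex.ofReal_sum]

/-- The coefficient of `ξ²` in the bound of `gain f - gain g` when `|f̂_J - ĝ_J| ≤ p_J ξ²`. -/
noncomputable def gainBound (lam : Cls → ℝ) (μ : Cls → Cls → Measure ℝ) (m p : Cls → ℝ)
    (H : Cls) : ℝ :=
  ∑ J : Cls, (m J * (∫ η, (1 - lam H + η) ^ 2 ∂(μ H J)) * p H + m H * lam J ^ 2 * p J)

theorem norm_gain_sub_gain_le {lam : Cls → ℝ} {μ : Cls → Cls → Measure ℝ}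
    (hμ : ∀ H J, IsProbabilityMeasure (μ H J))
    (hsq : ∀ H J, Integrable (fun η => (1 - lam H + η) ^ 2) (μ H J))
    {f g : Cls → ℝ → ℝ} (hf₀ : ∀ J w, 0 ≤ f J w) (hg₀ : ∀ J w, 0 ≤ g J w)
    (hf : ∀ J, Integrable (f J)) (hg : ∀ J, Integrable (g J))
    (hmass : ∀ J, ∫ w, f J w = ∫ w, g J w) {p : Cls → ℝ} {b : ℝ}
    (hfg : ∀ J ζ, ‖ft (f J) ζ - ft (g J) ζ‖ ≤ p J * ζ ^ 2 + b) (H : Cls) (ξ : ℝ) :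
    ‖gain lam μ f H ξ - gain lam μ g H ξ‖
      ≤ gainBound lam μ (fun J => ∫ w, f J w) p H * ξ ^ 2
        + b * ∑ J : Cls, ((∫ w, f J w) + ∫ w, f H w) := by
  rw [gain, gain, ← Finset.sum_sub_distrib, gainBound, Finset.sum_mul, Finset.mul_sum,
    ← Finset.sum_add_distrib]
  refine (norm_sum_le _ _).trans (Finset.sum_le_sum fun J _ => ?_)
  set Af := ∫ η, ft (f H) ((1 - lam H + η) * ξ) ∂(μ H J)
  set Ag := ∫ η, ft (g H) ((1 - lam H + η) * ξ) ∂(μ H J)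
  have hA : ‖Af - Ag‖ ≤ p H * (∫ η, (1 - lam H + η) ^ 2 ∂(μ H J)) * ξ ^ 2 + b :=
    norm_integral_ft_sub_le (hf H) (hg H) (hsq H J) (hfg H) ξ
  have hAg : ‖Ag‖ ≤ ∫ w, f H w := by
    have := hμ H J
    simpa using norm_integral_le_of_norm_le_const (μ := μ H J)
      (f := fun η => ft (g H) ((1 - lam H + η) * ξ))
      (Eventually.of_forall fun η => (norm_ft_le_integral (hg₀ H) _).trans_eq (hmass H).symm)
  have hB := hfg J (lam J * ξ)
  have hBf : ‖ft (f J) (lam J * ξ)‖ ≤ ∫ w, f J w := norm_ft_le_integral (hf₀ J) _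
  calc ‖Af * ft (f J) (lam J * ξ) - Ag * ft (g J) (lam J * ξ)‖
      = ‖(Af - Ag) * ft (f J) (lam J * ξ)
          + Ag * (ft (f J) (lam J * ξ) - ft (g J) (lam J * ξ))‖ := by
        ring_nf
    _ ≤ ‖Af - Ag‖ * ‖ft (f J) (lam J * ξ)‖
          + ‖Ag‖ * ‖ft (f J) (lam J * ξ) - ft (g J) (lam J * ξ)‖ := by
        rw [← norm_mul, ← norm_mul]
        exact norm_add_le _ _
    _ ≤ (p H * (∫ η, (1 - lam H + η) ^ 2 ∂(μ H J)) * ξ ^ 2 + b) * (∫ w, f J w)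
          + (∫ w, f H w) * (p J * (lam J * ξ) ^ 2 + b) := by
        gcongr
        · exact (norm_nonneg _).trans hA
        · exact (norm_nonneg _).trans hAg
    _ = _ := by ring

theorem sum_gainBound_le {lam : Cls → ℝ} {μ : Cls → Cls → Measure ℝ} {ν : ℝ}
    (hν : ∀ H J, lam H ^ 2 + ∫ η, (1 - lam H + η) ^ 2 ∂(μ H J) ≤ ν) {m p : Cls → ℝ}
    (hm : ∀ J, 0 ≤ m J) (hm₁ : ∑ J, m J = 1) (hp : ∀ J, 0 ≤ p J) :
    ∑ H, gainBound lam μ m p H ≤ ν * ∑ H, p H := by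
  have hsplit : ∑ H, gainBound lam μ m p H
      = ∑ H, (∑ J, m J * ∫ η, (1 - lam H + η) ^ 2 ∂(μ H J)) * p H + ∑ J, lam J ^ 2 * p J := by
    simp only [gainBound, Finset.sum_add_distrib, Finset.sum_mul]
    rw [Finset.sum_comm (f := fun H J => m H * lam J ^ 2 * p J)]
    simp only [mul_assoc, ← Finset.sum_mul, hm₁, one_mul]
  have hrow : ∀ H, ∑ J, m J * ∫ η, (1 - lam H + η) ^ 2 ∂(μ H J) ≤ ν - lam H ^ 2 := fun H =>
    calc _ ≤ ∑ J, m J * (ν - lam H ^ 2) :=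
          Finset.sum_le_sum fun J _ => mul_le_mul_of_nonneg_left (by linarith [hν H J]) (hm J)
      _ = ν - lam H ^ 2 := by rw [← Finset.sum_mul, hm₁, one_mul]
  calc ∑ H, gainBound lam μ m p H
      ≤ ∑ H, (ν - lam H ^ 2) * p H + ∑ J, lam J ^ 2 * p J := by
        rw [hsplit]
        gcongr with H
        exacts [hp H, hrow H]
    _ = ν * ∑ H, p H := by
        rw [Finset.mul_sum, ← Finset.sum_add_distrib]
        exact Finset.sum_congr rfl fun H _ => by ring

theorem Cls.sum_eq {M : Type*} [AddCommMonoid M] (u : Cls → M) :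
    ∑ J, u J = u .S + u .I + u .R := by
  rw [add_assoc]
  exact Finset.sum_insert (by decide) |>.trans (congrArg _ (Finset.sum_pair (by decide)))

/-- Per-capita rate at which class `H` is left through infection (`mI` is the infectious mass)
or recovery. -/
def sirLoss (β γ mI : ℝ) : Cls → ℝ
  | .S => β * mI
  | .I => γ
  | .R => 0

/-- What class `H` receives through infection `S → I` or recovery `I → R`. -/
def sirInflow {R : Type*} [Semiring R] (β γ mI : R) (x : Cls → R) : Cls → R
  | .S => 0
  | .I => β * mI * x .S
  | .R => γ * x .I

/-- The right-hand side of the Fourier-transformed SIR kinetic system. -/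
noncomputable def sirField (β γ : ℝ) (lam : Cls → ℝ) (μ : Cls → Cls → Measure ℝ)
    (F : Cls → ℝ → ℝ) (H : Cls) (ξ : ℝ) : ℂ :=
  -(sirLoss β γ (∫ w, F .I w) H : ℂ) * ft (F H) ξ
    + sirInflow (β : ℂ) γ (∫ w, F .I w : ℝ) (fun J => ft (F J) ξ) H + collision lam μ F H ξ

theorem sirInflow_sub {R : Type*} [Ring R] (β γ mI : R) (x y : Cls → R) (H : Cls) :
    sirInflow β γ mI (fun J => x J - y J) H = sirInflow β γ mI x H - sirInflow β γ mI y H := by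
  cases H <;> simp [sirInflow, mul_sub]

theorem sum_sirInflow (β γ mI : ℝ) (y : Cls → ℝ) :
    ∑ H, sirInflow β γ mI y H = ∑ H, sirLoss β γ mI H * y H := by
  simp only [Cls.sum_eq, sirInflow, sirLoss]
  ring

theorem norm_sirInflow_le_mul {β γ mI c : ℝ} (hβ : 0 ≤ β) (hγ : 0 ≤ γ) (hmI : 0 ≤ mI)
    {x : Cls → ℂ} {y : Cls → ℝ} (hxy : ∀ J, ‖x J‖ ≤ y J * c) (H : Cls) :
    ‖sirInflow (β : ℂ) γ mI x H‖ ≤ sirInflow β γ mI y H * c := by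
  cases H
  · simp [sirInflow]
  · simpa [sirInflow, abs_of_nonneg hβ, abs_of_nonneg hmI, mul_assoc] using
      mul_le_mul_of_nonneg_left (hxy .S) (mul_nonneg hβ hmI)
  · simpa [sirInflow, abs_of_nonneg hγ, mul_assoc] using mul_le_mul_of_nonneg_left (hxy .I) hγ

theorem norm_sirInflow_le {β γ mI a : ℝ} (hβ : 0 ≤ β) (hγ : 0 ≤ γ) (hmI : 0 ≤ mI)
    (hβmI : β * mI ≤ 1) (hγ₁ : γ ≤ 1) {x : Cls → ℂ} (hx : ∀ J, ‖x J‖ ≤ a) (H : Cls) :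
    ‖sirInflow (β : ℂ) γ mI x H‖ ≤ a := by
  have ha : 0 ≤ a := (norm_nonneg _).trans (hx .S)
  refine (norm_sirInflow_le_mul hβ hγ hmI (y := fun _ => a) (c := 1) (by simpa using hx) H).trans ?_
  cases H
  · simpa [sirInflow] using ha
  · simpa [sirInflow] using mul_le_of_le_one_left ha hβmI
  · simpa [sirInflow] using mul_le_of_le_one_left ha hγ₁

theorem sirLoss_nonneg {β γ mI : ℝ} (hβ : 0 ≤ β) (hγ : 0 ≤ γ) (hmI : 0 ≤ mI) (H : Cls) :
    0 ≤ sirLoss β γ mI H := by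
  cases H <;> simp [sirLoss] <;> positivity

theorem sirLoss_le_one {β γ mI : ℝ} (hβmI : β * mI ≤ 1) (hγ : γ ≤ 1) (H : Cls) :
    sirLoss β γ mI H ≤ 1 := by
  cases H <;> simp [sirLoss, hβmI, hγ]

theorem continuousOn_sirLoss {β γ : ℝ} {S : Set ℝ} {m : ℝ → ℝ} (hm : ContinuousOn m S) (H : Cls) :
    ContinuousOn (fun s => sirLoss β γ (m s) H) S := by
  cases H <;> simp only [sirLoss] <;> fun_prop

theorem hasDerivAt_ft_of_sir {β γ : ℝ} {lam : Cls → ℝ} {μ : Cls → Cls → Measure ℝ}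
    {F : Cls → ℝ → ℝ → ℝ}
    (hS : ∀ ξ : ℝ, ∀ t ≥ (0:ℝ), HasDerivAt (fun s => ft (F Cls.S s) ξ)
      (-(β : ℂ) * ((∫ w, F Cls.I t w : ℝ) : ℂ) * ft (F Cls.S t) ξ
        + collision lam μ (fun J => F J t) Cls.S ξ) t)
    (hI : ∀ ξ : ℝ, ∀ t ≥ (0:ℝ), HasDerivAt (fun s => ft (F Cls.I s) ξ)
      ((β : ℂ) * ((∫ w, F Cls.I t w : ℝ) : ℂ) * ft (F Cls.S t) ξ
        - (γ : ℂ) * ft (F Cls.I t) ξ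
        + collision lam μ (fun J => F J t) Cls.I ξ) t)
    (hR : ∀ ξ : ℝ, ∀ t ≥ (0:ℝ), HasDerivAt (fun s => ft (F Cls.R s) ξ)
      ((γ : ℂ) * ft (F Cls.I t) ξ
        + collision lam μ (fun J => F J t) Cls.R ξ) t) :
    ∀ H ξ, ∀ t ≥ (0:ℝ), HasDerivAt (fun s => ft (F H s) ξ)
      (sirField β γ lam μ (fun J => F J t) H ξ) t := by
  rintro (_ | _ | _) ξ t ht
  · convert hS ξ t ht using 1
    simp [sirField, sirLoss, sirInflow]
  · convert hI ξ t ht using 1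
    simp [sirField, sirLoss, sirInflow]
    ring
  · convert hR ξ t ht using 1
    simp [sirField, sirLoss, sirInflow]

/-- Bound on the right Dini derivative of `t ↦ d₂(f_H(t), g_H(t))`, given the masses `m` and the
current distances `h`. -/
noncomputable def sirRate (β γ : ℝ) (lam : Cls → ℝ) (μ : Cls → Cls → Measure ℝ) (m h : Cls → ℝ)
    (H : Cls) : ℝ :=
  -(1 + sirLoss β γ (m .I) H) * h H + (sirInflow β γ (m .I) h H + gainBound lam μ m h H)

theorem sum_sirRate_le {β γ ν : ℝ} {lam : Cls → ℝ} {μ : Cls → Cls → Measure ℝ}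
    (hν : ∀ H J, lam H ^ 2 + ∫ η, (1 - lam H + η) ^ 2 ∂(μ H J) ≤ ν) {m h : Cls → ℝ}
    (hm : ∀ J, 0 ≤ m J) (hm₁ : ∑ J, m J = 1) (hh : ∀ J, 0 ≤ h J) :
    ∑ H, sirRate β γ lam μ m h H ≤ -(1 - ν) * ∑ H, h H := by
  have hgain := sum_gainBound_le hν hm hm₁ hh
  have hinflow := sum_sirInflow β γ (m .I) h
  simp only [sirRate, Finset.sum_add_distrib, neg_mul, add_mul, one_mul, Finset.sum_neg_distrib]
    at hinflow ⊢
  linarith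

theorem continuousOn_sirInflow_add_gainBound {β γ : ℝ} {lam : Cls → ℝ}
    {μ : Cls → Cls → Measure ℝ} {S : Set ℝ} {m h : Cls → ℝ → ℝ} (hm : ∀ J, ContinuousOn (m J) S)
    (hh : ∀ J, ContinuousOn (h J) S) (H : Cls) :
    ContinuousOn
      (fun s => sirInflow β γ (m .I s) (h · s) H + gainBound lam μ (m · s) (h · s) H) S := by
  have := hm .I
  have := hh .S
  have := hh .I
  refine ContinuousOn.add ?_ (continuousOn_finsetSum _ fun J _ => by fun_prop)
  cases H <;> simp only [sirInflow] <;> fun_prop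

structure SIRModel (β γ : ℝ) (lam : Cls → ℝ) (μ : Cls → Cls → Measure ℝ) (ν : ℝ) : Prop where
  β_nonneg : 0 ≤ β
  β_le_one : β ≤ 1
  γ_nonneg : 0 ≤ γ
  γ_le_one : γ ≤ 1
  isProbabilityMeasure : ∀ H J, IsProbabilityMeasure (μ H J)
  integrable_sq : ∀ H J, Integrable (fun η => (1 - lam H + η) ^ 2) (μ H J)
  le_nu : ∀ H J, lam H ^ 2 + ∫ η, (1 - lam H + η) ^ 2 ∂(μ H J) ≤ ν
  nu_le_one : ν ≤ 1

namespace SIRModel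

variable {β γ ν : ℝ} {lam : Cls → ℝ} {μ : Cls → Cls → Measure ℝ}

theorem integral_sq_le_one (hM : SIRModel β γ lam μ ν) (H J : Cls) :
    ∫ η, (1 - lam H + η) ^ 2 ∂(μ H J) ≤ 1 := by
  linarith [hM.le_nu H J, hM.nu_le_one, sq_nonneg (lam H)]

theorem sq_le_one (hM : SIRModel β γ lam μ ν) (H : Cls) : lam H ^ 2 ≤ 1 := by
  have : 0 ≤ ∫ η, (1 - lam H + η) ^ 2 ∂(μ H H) := integral_nonneg fun η => sq_nonneg _
  linarith [hM.le_nu H H, hM.nu_le_one]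

end SIRModel

structure IsSIRSolutionPair (β γ : ℝ) (lam : Cls → ℝ) (μ : Cls → Cls → Measure ℝ)
    (f g : Cls → ℝ → ℝ → ℝ) : Prop where
  f_nonneg : ∀ J, ∀ t ≥ (0:ℝ), ∀ w, 0 ≤ f J t w
  g_nonneg : ∀ J, ∀ t ≥ (0:ℝ), ∀ w, 0 ≤ g J t w
  f_integrable : ∀ J, ∀ t ≥ (0:ℝ), Integrable (f J t)
  g_integrable : ∀ J, ∀ t ≥ (0:ℝ), Integrable (g J t)
  mass_sum : ∀ t ≥ (0:ℝ), ∑ J, ∫ w, f J t w = 1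
  mass_eq : ∀ J, ∀ t ≥ (0:ℝ), ∫ w, f J t w = ∫ w, g J t w
  hasDerivAt_f : ∀ H ξ, ∀ t ≥ (0:ℝ), HasDerivAt (fun s => ft (f H s) ξ)
    (sirField β γ lam μ (fun J => f J t) H ξ) t
  hasDerivAt_g : ∀ H ξ, ∀ t ≥ (0:ℝ), HasDerivAt (fun s => ft (g H s) ξ)
    (sirField β γ lam μ (fun J => g J t) H ξ) t

noncomputable def ftDiff (f g : Cls → ℝ → ℝ → ℝ) (H : Cls) (s ξ : ℝ) : ℂ :=
  ft (f H s) ξ - ft (g H s) ξ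

noncomputable def sirSource (β γ : ℝ) (lam : Cls → ℝ) (μ : Cls → Cls → Measure ℝ)
    (f g : Cls → ℝ → ℝ → ℝ) (H : Cls) (s ξ : ℝ) : ℂ :=
  sirInflow (β : ℂ) γ (∫ w, f .I s w : ℝ) (ftDiff f g · s ξ) H
    + (gain lam μ (fun J => f J s) H ξ - gain lam μ (fun J => g J s) H ξ)

namespace IsSIRSolutionPair

variable {β γ ν : ℝ} {lam : Cls → ℝ} {μ : Cls → Cls → Measure ℝ} {f g : Cls → ℝ → ℝ → ℝ}

theorem mass_nonneg (hP : IsSIRSolutionPair β γ lam μ f g) (J : Cls) {t : ℝ} (ht : 0 ≤ t) :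
    0 ≤ ∫ w, f J t w :=
  integral_nonneg (hP.f_nonneg J t ht)

theorem mass_le_one (hP : IsSIRSolutionPair β γ lam μ f g) (J : Cls) {t : ℝ} (ht : 0 ≤ t) :
    ∫ w, f J t w ≤ 1 :=
  hP.mass_sum t ht ▸ Finset.single_le_sum (fun K _ => hP.mass_nonneg K ht) (Finset.mem_univ J)

theorem continuousOn_mass (hP : IsSIRSolutionPair β γ lam μ f g) (J : Cls) :
    ContinuousOn (fun s => ∫ w, f J s w) (Ici 0) := fun s hs => by
  have := Complex.continuous_re.continuousAt.comp (hP.hasDerivAt_f J 0 s hs).continuousAt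
  simpa [ft_zero, Function.comp_def] using this.continuousWithinAt

theorem norm_ftDiff_le_two (hP : IsSIRSolutionPair β γ lam μ f g) (H : Cls) {t : ℝ}
    (ht : 0 ≤ t) (ξ : ℝ) : ‖ftDiff f g H t ξ‖ ≤ 2 := by
  have hf := norm_ft_le_integral (hP.f_nonneg H t ht) ξ
  have hg := (norm_ft_le_integral (hP.g_nonneg H t ht) ξ).trans_eq (hP.mass_eq H t ht).symm
  have := hP.mass_le_one H ht
  exact (norm_sub_le _ _).trans (by linarith)

theorem hasDerivAt_ftDiff (hP : IsSIRSolutionPair β γ lam μ f g) (H : Cls) (ξ : ℝ) {t : ℝ}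
    (ht : 0 ≤ t) :
    HasDerivAt (ftDiff f g H · ξ) (-(1 + sirLoss β γ (∫ w, f .I t w) H) • ftDiff f g H t ξ
      + sirSource β γ lam μ f g H t ξ) t := by
  refine ((hP.hasDerivAt_f H ξ t ht).sub (hP.hasDerivAt_g H ξ t ht)).congr_deriv ?_
  have hmass : ∑ J, ∫ w, g J t w = 1 := by
    simpa [hP.mass_eq _ t ht] using hP.mass_sum t ht
  simp only [sirField, sirSource, collision_eq_gain_sub, hP.mass_sum t ht, hmass,
    ← hP.mass_eq .I t ht, ftDiff, sirInflow_sub, Complex.real_smul]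
  push_cast
  ring

theorem norm_gain_sub_gain_le (hP : IsSIRSolutionPair β γ lam μ f g) (hM : SIRModel β γ lam μ ν)
    {t : ℝ} (ht : 0 ≤ t) {p : Cls → ℝ} {b : ℝ}
    (hφ : ∀ J ζ, ‖ftDiff f g J t ζ‖ ≤ p J * ζ ^ 2 + b) (H : Cls) (ξ : ℝ) :
    ‖gain lam μ (fun J => f J t) H ξ - gain lam μ (fun J => g J t) H ξ‖
      ≤ gainBound lam μ (fun J => ∫ w, f J t w) p H * ξ ^ 2
        + b * ∑ J : Cls, ((∫ w, f J t w) + ∫ w, f H t w) :=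
  _root_.norm_gain_sub_gain_le hM.isProbabilityMeasure hM.integrable_sq
    (fun J => hP.f_nonneg J t ht) (fun J => hP.g_nonneg J t ht) (fun J => hP.f_integrable J t ht)
    (fun J => hP.g_integrable J t ht) (fun J => hP.mass_eq J t ht) hφ H ξ

theorem norm_sirSource_le_mul (hP : IsSIRSolutionPair β γ lam μ f g) (hM : SIRModel β γ lam μ ν)
    {t : ℝ} (ht : 0 ≤ t) {p : Cls → ℝ} (hφ : ∀ J ζ, ‖ftDiff f g J t ζ‖ ≤ p J * ζ ^ 2)
    (H : Cls) (ξ : ℝ) :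
    ‖sirSource β γ lam μ f g H t ξ‖ ≤ (sirInflow β γ (∫ w, f .I t w) p H
      + gainBound lam μ (fun J => ∫ w, f J t w) p H) * ξ ^ 2 := by
  have hinflow := norm_sirInflow_le_mul hM.β_nonneg hM.γ_nonneg (hP.mass_nonneg .I ht)
    (fun J => hφ J ξ) H
  have hgain := hP.norm_gain_sub_gain_le hM ht (b := 0) (by simpa using hφ) H ξ
  rw [zero_mul, add_zero] at hgain
  exact (norm_add_le _ _).trans (by linarith)

theorem norm_sirSource_le (hP : IsSIRSolutionPair β γ lam μ f g) (hM : SIRModel β γ lam μ ν)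
    {t : ℝ} (ht : 0 ≤ t) {p b : ℝ} (hp : 0 ≤ p) (hb : 0 ≤ b)
    (hφ : ∀ J ζ, ‖ftDiff f g J t ζ‖ ≤ p * ζ ^ 2 + b) (H : Cls) (ξ : ℝ) :
    ‖sirSource β γ lam μ f g H t ξ‖ ≤ 5 * (p * ξ ^ 2 + b) := by
  set m : Cls → ℝ := fun J => ∫ w, f J t w
  have hm₀ : ∀ J, 0 ≤ m J := fun J => hP.mass_nonneg J ht
  have hinflow := norm_sirInflow_le hM.β_nonneg hM.γ_nonneg (hm₀ .I)
    (mul_le_one₀ hM.β_le_one (hm₀ .I) (hP.mass_le_one .I ht)) hM.γ_le_one (fun J => hφ J ξ) H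
  have hgain := hP.norm_gain_sub_gain_le hM ht (p := fun _ => p) hφ H ξ
  have hmass : ∑ J, (m J + m H) ≤ 4 := by
    rw [Finset.sum_add_distrib, hP.mass_sum t ht, Finset.sum_const, Finset.card_univ,
      show Fintype.card Cls = 3 from rfl, nsmul_eq_mul, Nat.cast_ofNat]
    have : m H ≤ 1 := hP.mass_le_one H ht
    linarith
  have hbound : gainBound lam μ m (fun _ => p) H ≤ ∑ J, (m J + m H) * p := by
    refine Finset.sum_le_sum fun J _ => ?_
    have h1 := mul_le_mul_of_nonneg_left (hM.integral_sq_le_one H J) (hm₀ J)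
    have h2 := mul_le_mul_of_nonneg_left (hM.sq_le_one J) (hm₀ H)
    nlinarith
  rw [← Finset.sum_mul] at hbound
  calc ‖sirSource β γ lam μ f g H t ξ‖ ≤ (p * ξ ^ 2 + b) + (gainBound lam μ m (fun _ => p) H * ξ ^ 2
        + b * ∑ J, (m J + m H)) := (norm_add_le _ _).trans (add_le_add hinflow hgain)
    _ ≤ (p * ξ ^ 2 + b) + 4 * (p * ξ ^ 2 + b) := by
      have : 0 ≤ p * ξ ^ 2 := by positivity
      nlinarith
    _ = 5 * (p * ξ ^ 2 + b) := by ring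

theorem norm_deriv_ftDiff_le (hP : IsSIRSolutionPair β γ lam μ f g) (hM : SIRModel β γ lam μ ν)
    {t : ℝ} (ht : 0 ≤ t) {p b : ℝ} (hp : 0 ≤ p) (hb : 0 ≤ b)
    (hφ : ∀ J ζ, ‖ftDiff f g J t ζ‖ ≤ p * ζ ^ 2 + b) (H : Cls) (ξ : ℝ) :
    ‖-(1 + sirLoss β γ (∫ w, f .I t w) H) • ftDiff f g H t ξ + sirSource β γ lam μ f g H t ξ‖
      ≤ 7 * (p * ξ ^ 2 + b) := by
  have hloss₀ := sirLoss_nonneg hM.β_nonneg hM.γ_nonneg (hP.mass_nonneg .I ht) H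
  have hloss₁ := sirLoss_le_one
    (mul_le_one₀ hM.β_le_one (hP.mass_nonneg .I ht) (hP.mass_le_one .I ht)) hM.γ_le_one H
  have hdamp : ‖-(1 + sirLoss β γ (∫ w, f .I t w) H) • ftDiff f g H t ξ‖ ≤ 2 * (p * ξ ^ 2 + b) := by
    rw [norm_smul, norm_neg, Real.norm_of_nonneg (by linarith)]
    exact mul_le_mul (by linarith) (hφ H ξ) (norm_nonneg _) zero_le_two
  have := hP.norm_sirSource_le hM ht hp hb hφ H ξ
  exact (norm_add_le _ _).trans (by linarith)

theorem exists_norm_ftDiff_le (hP : IsSIRSolutionPair β γ lam μ f g) (hM : SIRModel β γ lam μ ν)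
    (hfin : ∀ H, d2 (f H 0) (g H 0) ≠ ⊤) (T : ℝ) :
    ∃ M, 0 ≤ M ∧ ∀ H ξ, ∀ s ∈ Icc 0 T, ‖ftDiff f g H s ξ‖ ≤ M * ξ ^ 2 := by
  set C := ∑ H, (d2 (f H 0) (g H 0)).toReal
  have h₀ : ∀ H ξ, ‖ftDiff f g H 0 ξ‖ ≤ C * ξ ^ 2 := fun H ξ =>
    ((isLeast_toReal_d2 (hfin H) (hP.mass_eq H 0 le_rfl)).1 ξ).trans <| by
      gcongr
      exact Finset.single_le_sum (f := fun J => (d2 (f J 0) (g J 0)).toReal)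
        (fun J _ => ENNReal.toReal_nonneg) (Finset.mem_univ H)
  obtain ⟨M, hM₀, hbound⟩ := exists_norm_le_mul_of_hasDerivAt
    (u := fun i s => ftDiff f g i.1 s i.2) (w := fun i : Cls × ℝ => i.2 ^ 2)
    (u' := fun i s => -(1 + sirLoss β γ (∫ w, f .I s w) i.1) • ftDiff f g i.1 s i.2
      + sirSource β γ lam μ f g i.1 s i.2)
    (by norm_num : (0 : ℝ) < 7) (fun i => sq_nonneg _)
    (fun i s hs => hP.hasDerivAt_ftDiff i.1 i.2 hs)
    (fun i s hs => hP.norm_ftDiff_le_two i.1 hs i.2)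
    (fun s hs p b hp hb hφ i =>
      hP.norm_deriv_ftDiff_le hM hs hp hb (fun J ζ => hφ (J, ζ)) i.1 i.2)
    (by positivity) (fun i => h₀ i.1 i.2) T
  exact ⟨M, hM₀, fun H ξ => hbound (H, ξ)⟩

variable {T M : ℝ}

theorem isLeast_toReal_d2_of_le (hP : IsSIRSolutionPair β γ lam μ f g)
    (hbound : ∀ H ξ, ∀ s ∈ Icc 0 T, ‖ftDiff f g H s ξ‖ ≤ M * ξ ^ 2) (H : Cls) :
    ∀ s ∈ Icc 0 T, IsLeast {C | ∀ ξ, ‖ftDiff f g H s ξ‖ ≤ C * ξ ^ 2} (d2 (f H s) (g H s)).toReal :=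
  fun s hs => isLeast_toReal_d2
    (ne_top_of_le_ne_top ENNReal.ofReal_ne_top (d2_le_ofReal (hbound H · s hs)))
    (hP.mass_eq H s hs.1)

theorem norm_ftDiff_sub_le (hP : IsSIRSolutionPair β γ lam μ f g) (hM : SIRModel β γ lam μ ν)
    (hbound : ∀ H ξ, ∀ s ∈ Icc 0 T, ‖ftDiff f g H s ξ‖ ≤ M * ξ ^ 2) (hM₀ : 0 ≤ M) (H : Cls)
    (ξ : ℝ) : ∀ x ∈ Icc 0 T, ∀ y ∈ Icc 0 T,
      ‖ftDiff f g H x ξ - ftDiff f g H y ξ‖ ≤ 7 * M * ξ ^ 2 * dist x y := by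
  intro x hx y hy
  have := (convex_Icc 0 T).norm_image_sub_le_of_norm_hasDerivWithin_le
    (fun s hs => (hP.hasDerivAt_ftDiff H ξ hs.1).hasDerivWithinAt)
    (fun s hs => (hP.norm_deriv_ftDiff_le hM hs.1 hM₀ le_rfl
      (by simpa using (hbound · · s hs)) H ξ).trans_eq (by ring : _ = 7 * M * ξ ^ 2)) hy hx
  rwa [dist_eq_norm x y]

theorem continuousOn_toReal_d2 (hP : IsSIRSolutionPair β γ lam μ f g) (hM : SIRModel β γ lam μ ν)
    (hbound : ∀ H ξ, ∀ s ∈ Icc 0 T, ‖ftDiff f g H s ξ‖ ≤ M * ξ ^ 2) (hM₀ : 0 ≤ M) (H : Cls) :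
    ContinuousOn (fun s => (d2 (f H s) (g H s)).toReal) (Icc 0 T) :=
  (lipschitzOnWith_of_isLeast (hP.isLeast_toReal_d2_of_le hbound H)
    fun ξ => hP.norm_ftDiff_sub_le hM hbound hM₀ H ξ).continuousOn

theorem eventually_slope_toReal_d2_lt (hP : IsSIRSolutionPair β γ lam μ f g)
    (hM : SIRModel β γ lam μ ν) (hbound : ∀ H ξ, ∀ s ∈ Icc 0 T, ‖ftDiff f g H s ξ‖ ≤ M * ξ ^ 2)
    (hM₀ : 0 ≤ M) (H : Cls) {t₀ : ℝ} (ht₀ : t₀ ∈ Ico 0 T) {r : ℝ}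
    (hr : sirRate β γ lam μ (fun J => ∫ w, f J t₀ w) (fun J => (d2 (f J t₀) (g J t₀)).toReal) H
      < r) :
    ∀ᶠ z in 𝓝[>] t₀,
      (z - t₀)⁻¹ * ((d2 (f H z) (g H z)).toReal - (d2 (f H t₀) (g H t₀)).toReal) < r := by
  have hsub : Icc t₀ T ⊆ Icc 0 T := Icc_subset_Icc_left ht₀.1
  have ht₀T : t₀ ∈ Icc 0 T := Ico_subset_Icc_self ht₀
  have hmass : ∀ J, ContinuousOn (fun s => ∫ w, f J s w) (Icc 0 T) :=
    fun J => (hP.continuousOn_mass J).mono fun s hs => hs.1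
  have hd2 := hP.continuousOn_toReal_d2 hM hbound hM₀
  refine eventually_slope_lt_of_isLeast (u := fun ξ s => ftDiff f g H s ξ) (w := fun ξ => ξ ^ 2)
    (κ := fun ξ s => sirSource β γ lam μ f g H s ξ) ht₀.2 (fun ξ => sq_nonneg ξ)
    (fun s hs => hP.isLeast_toReal_d2_of_le hbound H s (hsub hs))
    (fun ξ s hs => (hP.hasDerivAt_ftDiff H ξ (hsub hs).1).hasDerivWithinAt)
    (fun ξ s hs => hP.norm_sirSource_le_mul hM (hsub hs).1
      (fun J ζ => (hP.isLeast_toReal_d2_of_le hbound J s (hsub hs)).1 ζ) H ξ)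
    (by positivity : 0 ≤ 7 * M)
    (fun ξ s hs => hP.norm_ftDiff_sub_le hM hbound hM₀ H ξ s (hsub hs) t₀ ht₀T)
    (by linarith [sirLoss_nonneg hM.β_nonneg hM.γ_nonneg (hP.mass_nonneg .I ht₀.1) H])
    ((continuousOn_const.add (continuousOn_sirLoss (hmass .I) H)).continuousWithinAt ht₀T
      |>.mono hsub)
    ((continuousOn_sirInflow_add_gainBound hmass hd2 H).continuousWithinAt ht₀T |>.mono hsub) hr

theorem sum_toReal_d2_le (hP : IsSIRSolutionPair β γ lam μ f g) (hM : SIRModel β γ lam μ ν)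
    (hbound : ∀ H ξ, ∀ s ∈ Icc 0 T, ‖ftDiff f g H s ξ‖ ≤ M * ξ ^ 2) (hM₀ : 0 ≤ M) (hT : 0 ≤ T) :
    ∑ H, (d2 (f H T) (g H T)).toReal
      ≤ Real.exp (-(1 - ν) * T) * ∑ H, (d2 (f H 0) (g H 0)).toReal :=
  sum_le_exp_mul_of_eventually_slope_lt hT (hP.continuousOn_toReal_d2 hM hbound hM₀)
    (fun H _ hx _ hr => hP.eventually_slope_toReal_d2_lt hM hbound hM₀ H hx hr)
    (fun x hx => sum_sirRate_le hM.le_nu (fun J => hP.mass_nonneg J hx.1) (hP.mass_sum x hx.1)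
      fun _ => ENNReal.toReal_nonneg)

theorem sum_d2_le (hP : IsSIRSolutionPair β γ lam μ f g) (hM : SIRModel β γ lam μ ν)
    (hfin : ∀ H, d2 (f H 0) (g H 0) ≠ ⊤) (hT : 0 ≤ T) :
    ∑ H, d2 (f H T) (g H T)
      ≤ ENNReal.ofReal (Real.exp (-(1 - ν) * T)) * ∑ H, d2 (f H 0) (g H 0) := by
  obtain ⟨M, hM₀, hbound⟩ := hP.exists_norm_ftDiff_le hM hfin T
  have hfinT : ∀ H, d2 (f H T) (g H T) ≠ ⊤ := fun H =>
    ne_top_of_le_ne_top ENNReal.ofReal_ne_top (d2_le_ofReal (hbound H · T ⟨hT, le_rfl⟩))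
  calc ∑ H, d2 (f H T) (g H T) = ENNReal.ofReal (∑ H, (d2 (f H T) (g H T)).toReal) := by
        rw [ENNReal.ofReal_sum_of_nonneg fun _ _ => ENNReal.toReal_nonneg]
        simp [ENNReal.ofReal_toReal, hfinT]
    _ ≤ ENNReal.ofReal (Real.exp (-(1 - ν) * T) * ∑ H, (d2 (f H 0) (g H 0)).toReal) :=
        ENNReal.ofReal_le_ofReal (hP.sum_toReal_d2_le hM hbound hM₀ hT)
    _ = _ := by
        rw [ENNReal.ofReal_mul (Real.exp_nonneg _),
          ENNReal.ofReal_sum_of_nonneg fun _ _ => ENNReal.toReal_nonneg]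
        simp [ENNReal.ofReal_toReal, hfin]

end IsSIRSolutionPair

theorem kinetic_SIR_d2_contraction_general
    (β γ : ℝ) (hβ : β ∈ Set.Ioo (0:ℝ) 1) (hγ : γ ∈ Set.Ioo (0:ℝ) 1)
    (lam : Cls → ℝ)
    (μ : Cls → Cls → Measure ℝ) (hμprob : ∀ H J, IsProbabilityMeasure (μ H J))
    (hμint2 : ∀ H J, Integrable (fun η => η ^ 2) (μ H J))
    (ν : ℝ)
    (hνdef : ν = ⨆ H : Cls, ⨆ J : Cls,
      (lam J ^ 2 + ∫ η, (1 - lam J + η) ^ 2 ∂(μ J H)))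
    (hν : ν < 1)
    (f g : Cls → ℝ → ℝ → ℝ)
    (hfpos : ∀ J, ∀ t ≥ (0:ℝ), ∀ w, 0 ≤ f J t w)
    (hgpos : ∀ J, ∀ t ≥ (0:ℝ), ∀ w, 0 ≤ g J t w)
    (hfint : ∀ J, ∀ t ≥ (0:ℝ), Integrable (f J t))
    (hgint : ∀ J, ∀ t ≥ (0:ℝ), Integrable (g J t))
    (hfmass : ∀ t ≥ (0:ℝ), (∑ J : Cls, ∫ w, f J t w) = 1)
    -- Fourier-transformed kinetic system for `f`
    (hfS : ∀ ξ : ℝ, ∀ t ≥ (0:ℝ), HasDerivAt (fun s => ft (f Cls.S s) ξ)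
      (-(β : ℂ) * ((∫ w, f Cls.I t w : ℝ) : ℂ) * ft (f Cls.S t) ξ
        + collision lam μ (fun J => f J t) Cls.S ξ) t)
    (hfI : ∀ ξ : ℝ, ∀ t ≥ (0:ℝ), HasDerivAt (fun s => ft (f Cls.I s) ξ)
      ((β : ℂ) * ((∫ w, f Cls.I t w : ℝ) : ℂ) * ft (f Cls.S t) ξ
        - (γ : ℂ) * ft (f Cls.I t) ξ
        + collision lam μ (fun J => f J t) Cls.I ξ) t)
    (hfR : ∀ ξ : ℝ, ∀ t ≥ (0:ℝ), HasDerivAt (fun s => ft (f Cls.R s) ξ)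
      ((γ : ℂ) * ft (f Cls.I t) ξ
        + collision lam μ (fun J => f J t) Cls.R ξ) t)
    -- Fourier-transformed kinetic system for `g`
    (hgS : ∀ ξ : ℝ, ∀ t ≥ (0:ℝ), HasDerivAt (fun s => ft (g Cls.S s) ξ)
      (-(β : ℂ) * ((∫ w, g Cls.I t w : ℝ) : ℂ) * ft (g Cls.S t) ξ
        + collision lam μ (fun J => g J t) Cls.S ξ) t)
    (hgI : ∀ ξ : ℝ, ∀ t ≥ (0:ℝ), HasDerivAt (fun s => ft (g Cls.I s) ξ)
      ((β : ℂ) * ((∫ w, g Cls.I t w : ℝ) : ℂ) * ft (g Cls.S t) ξ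
        - (γ : ℂ) * ft (g Cls.I t) ξ
        + collision lam μ (fun J => g J t) Cls.I ξ) t)
    (hgR : ∀ ξ : ℝ, ∀ t ≥ (0:ℝ), HasDerivAt (fun s => ft (g Cls.R s) ξ)
      ((γ : ℂ) * ft (g Cls.I t) ξ
        + collision lam μ (fun J => g J t) Cls.R ξ) t)
    -- equal masses and equal mean wealths at all times
    (hmass : ∀ J, ∀ t ≥ (0:ℝ), (∫ w, f J t w) = ∫ w, g J t w)
    -- finite initial distance
    (hfin : (∑ J : Cls, d2 (f J 0) (g J 0)) < ⊤) :
    ∀ t ≥ (0:ℝ), (∑ J : Cls, d2 (f J t) (g J t))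
      ≤ ENNReal.ofReal (Real.exp (-(1 - ν) * t)) * ∑ J : Cls, d2 (f J 0) (g J 0) := by
  have hle : ∀ H J, lam H ^ 2 + ∫ η, (1 - lam H + η) ^ 2 ∂(μ H J) ≤ ν := fun H J => by
    rw [hνdef]
    exact (le_ciSup (f := fun K => lam K ^ 2 + ∫ η, (1 - lam K + η) ^ 2 ∂(μ K J))
      (Set.finite_range _).bddAbove H).trans (le_ciSup (f := fun L => ⨆ K,
        lam K ^ 2 + ∫ η, (1 - lam K + η) ^ 2 ∂(μ K L)) (Set.finite_range _).bddAbove J)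
  have hM : SIRModel β γ lam μ ν :=
    ⟨hβ.1.le, hβ.2.le, hγ.1.le, hγ.2.le, hμprob,
      fun H J => have := hμprob H J; integrable_add_sq (hμint2 H J) _, hle, hν.le⟩
  have hP : IsSIRSolutionPair β γ lam μ f g :=
    ⟨hfpos, hgpos, hfint, hgint, hfmass, hmass, hasDerivAt_ft_of_sir hfS hfI hfR,
      hasDerivAt_ft_of_sir hgS hgI hgR⟩
  exact fun t ht =>
    hP.sum_d2_le hM (fun H => (ENNReal.sum_lt_top.mp hfin H (Finset.mem_univ H)).ne) ht

/-- **Exponential contraction of the Fourier distance `d₂` for the SIR-type kinetic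
wealth-exchange system** (Theorem 1 of Dimarco, Pareschi, Toscani, Zanella,
"Wealth distribution under the spread of infectious diseases"). If
`ν = max_{H,J} (λ_J² + ∫ (1-λ_J+η)² dμ_{JH}) < 1`, then any two solutions of the
Fourier-transformed kinetic system with equal masses and mean wealths in each class
satisfy `∑_J d₂(f_J(t), g_J(t)) ≤ e^{-(1-ν)t} ∑_J d₂(f_J(0), g_J(0))`. -/
theorem kinetic_SIR_d2_contraction
    (β γ : ℝ) (hβ : β ∈ Set.Ioo (0:ℝ) 1) (hγ : γ ∈ Set.Ioo (0:ℝ) 1)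
    (lam : Cls → ℝ) (hlam : ∀ J, lam J ∈ Set.Ioo (0:ℝ) 1)
    (μ : Cls → Cls → Measure ℝ) (hμprob : ∀ H J, IsProbabilityMeasure (μ H J))
    (σ : ℝ)
    (hμint : ∀ H J, Integrable (fun η => η) (μ H J))
    (hμint2 : ∀ H J, Integrable (fun η => η ^ 2) (μ H J))
    (hμmean : ∀ H J, (∫ η, η ∂(μ H J)) = 0)
    (hμvar : ∀ H J, (∫ η, η ^ 2 ∂(μ H J)) = σ ^ 2)
    (ν : ℝ)
    (hνdef : ν = ⨆ H : Cls, ⨆ J : Cls,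
      (lam J ^ 2 + ∫ η, (1 - lam J + η) ^ 2 ∂(μ J H)))
    (hν : ν < 1)
    (f g : Cls → ℝ → ℝ → ℝ)
    (hfpos : ∀ J, ∀ t ≥ (0:ℝ), ∀ w, 0 ≤ f J t w)
    (hgpos : ∀ J, ∀ t ≥ (0:ℝ), ∀ w, 0 ≤ g J t w)
    (hfint : ∀ J, ∀ t ≥ (0:ℝ), Integrable (f J t))
    (hgint : ∀ J, ∀ t ≥ (0:ℝ), Integrable (g J t))
    (hfmass : ∀ t ≥ (0:ℝ), (∑ J : Cls, ∫ w, f J t w) = 1)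
    (hgmass : ∀ t ≥ (0:ℝ), (∑ J : Cls, ∫ w, g J t w) = 1)
    -- Fourier-transformed kinetic system for `f`
    (hfS : ∀ ξ : ℝ, ∀ t ≥ (0:ℝ), HasDerivAt (fun s => ft (f Cls.S s) ξ)
      (-(β : ℂ) * ((∫ w, f Cls.I t w : ℝ) : ℂ) * ft (f Cls.S t) ξ
        + collision lam μ (fun J => f J t) Cls.S ξ) t)
    (hfI : ∀ ξ : ℝ, ∀ t ≥ (0:ℝ), HasDerivAt (fun s => ft (f Cls.I s) ξ)
      ((β : ℂ) * ((∫ w, f Cls.I t w : ℝ) : ℂ) * ft (f Cls.S t) ξ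
        - (γ : ℂ) * ft (f Cls.I t) ξ
        + collision lam μ (fun J => f J t) Cls.I ξ) t)
    (hfR : ∀ ξ : ℝ, ∀ t ≥ (0:ℝ), HasDerivAt (fun s => ft (f Cls.R s) ξ)
      ((γ : ℂ) * ft (f Cls.I t) ξ
        + collision lam μ (fun J => f J t) Cls.R ξ) t)
    -- Fourier-transformed kinetic system for `g`
    (hgS : ∀ ξ : ℝ, ∀ t ≥ (0:ℝ), HasDerivAt (fun s => ft (g Cls.S s) ξ)
      (-(β : ℂ) * ((∫ w, g Cls.I t w : ℝ) : ℂ) * ft (g Cls.S t) ξ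
        + collision lam μ (fun J => g J t) Cls.S ξ) t)
    (hgI : ∀ ξ : ℝ, ∀ t ≥ (0:ℝ), HasDerivAt (fun s => ft (g Cls.I s) ξ)
      ((β : ℂ) * ((∫ w, g Cls.I t w : ℝ) : ℂ) * ft (g Cls.S t) ξ
        - (γ : ℂ) * ft (g Cls.I t) ξ
        + collision lam μ (fun J => g J t) Cls.I ξ) t)
    (hgR : ∀ ξ : ℝ, ∀ t ≥ (0:ℝ), HasDerivAt (fun s => ft (g Cls.R s) ξ)
      ((γ : ℂ) * ft (g Cls.I t) ξ
        + collision lam μ (fun J => g J t) Cls.R ξ) t)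
    -- equal masses and equal mean wealths at all times
    (hmass : ∀ J, ∀ t ≥ (0:ℝ), (∫ w, f J t w) = ∫ w, g J t w)
    (hfmom : ∀ J, ∀ t ≥ (0:ℝ), Integrable (fun w => w * f J t w))
    (hgmom : ∀ J, ∀ t ≥ (0:ℝ), Integrable (fun w => w * g J t w))
    (hmom : ∀ J, ∀ t ≥ (0:ℝ), (∫ w, w * f J t w) = ∫ w, w * g J t w)
    -- finite initial distance
    (hfin : (∑ J : Cls, d2 (f J 0) (g J 0)) < ⊤) :
    ∀ t ≥ (0:ℝ), (∑ J : Cls, d2 (f J t) (g J t))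
      ≤ ENNReal.ofReal (Real.exp (-(1 - ν) * t)) * ∑ J : Cls, d2 (f J 0) (g J 0) :=
  kinetic_SIR_d2_contraction_general β γ hβ hγ lam μ hμprob hμint2 ν hνdef hν f g hfpos hgpos hfint
    hgint hfmass hfS hfI hfR hgS hgI hgR hmass hfin
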